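/- arXiv:1502.07686 — 5 statements merged into one kernel-verified Lean document; each statement's English description precedes it below -/
import Mathlib

section
/- With $p_1, p_2, q_1, q_2$ as in the peakon-antipeakon solution, $p_1(t) \to +\infty$ and $p_2(t) \to -\infty$ as $t \to t_0^-$ (assuming $c_1 > 0 > c_2$). -/
open Real Filter

theorem peakon_heights_blowup (c₁ c₂ t₀ : ℝ) (hc₁ : c₁ > 0) (hc₂ : 0 > c₂) (ht₀ : t₀ > 0)
    (L : ℝ) (hL : L = c₁ - c₂)
    (p₁ p₂ : ℝ → ℝ)
    (hp₁ : ∀ t, p₁ t = (c₁ - c₂ * exp (L * (t - t₀))) / (1 - exp (L * (t - t₀))))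
    (hp₂ : ∀ t, p₂ t = (c₂ - c₁ * exp (L * (t - t₀))) / (1 - exp (L * (t - t₀)))) :
    Tendsto p₁ (nhdsWithin t₀ (Set.Iio t₀)) atTop ∧
    Tendsto p₂ (nhdsWithin t₀ (Set.Iio t₀)) atBot := by
  have hLpos : 0 < L := by rw [hL]; linarith
  set E : ℝ → ℝ := fun t => exp (L * (t - t₀)) with hE
  have hEcont : Tendsto E (nhdsWithin t₀ (Set.Iio t₀)) (nhds 1) := by
    have : Continuous E := by continuity
    have h := (this.tendsto t₀).mono_left (nhdsWithin_le_nhds (s := Set.Iio t₀))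
    simpa [hE] using h
  have hden : Tendsto (fun t => 1 - E t) (nhdsWithin t₀ (Set.Iio t₀))
      (nhdsWithin 0 (Set.Ioi 0)) := by
    apply tendsto_nhdsWithin_of_tendsto_nhds_of_eventually_within
    · simpa using ((tendsto_const_nhds (x := (1:ℝ))).sub hEcont)
    · filter_upwards [self_mem_nhdsWithin] with t ht
      have : E t < 1 := by
        rw [hE]
        simp only
        rw [exp_lt_one_iff]
        have : t - t₀ < 0 := by simpa [sub_neg] using ht
        nlinarith
      simpa [Set.mem_Ioi] using sub_pos.mpr this
  have hinv : Tendsto (fun t => (1 - E t)⁻¹) (nhdsWithin t₀ (Set.Iio t₀)) atTop :=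
    tendsto_inv_nhdsGT_zero.comp hden
  constructor
  · have hnum : Tendsto (fun t => c₁ - c₂ * E t) (nhdsWithin t₀ (Set.Iio t₀))
        (nhds (c₁ - c₂)) := by
      have := (tendsto_const_nhds (x := c₁)).sub ((tendsto_const_nhds (x := c₂)).mul hEcont)
      simpa using this
    have h := Filter.Tendsto.pos_mul_atTop (by linarith : (0:ℝ) < c₁ - c₂) hnum hinv
    refine h.congr fun t => ?_
    rw [hp₁ t, div_eq_mul_inv]
  · have hnum : Tendsto (fun t => c₂ - c₁ * E t) (nhdsWithin t₀ (Set.Iio t₀))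
        (nhds (c₂ - c₁)) := by
      have := (tendsto_const_nhds (x := c₂)).sub ((tendsto_const_nhds (x := c₁)).mul hEcont)
      simpa using this
    have h := Filter.Tendsto.neg_mul_atTop (by linarith : c₂ - c₁ < 0) hnum hinv
    refine h.congr fun t => ?_
    rw [hp₂ t, div_eq_mul_inv]
end

section
/- For $t < t_0$ and $u(t,x) = p_1(t) e^{-|x - q_1(t)|} + p_2(t) e^{-|x - q_2(t)|}$ with $p_j, q_j$ the peakon-antipeakon data, the total energy satisfies $\int_{\mathbb{R}} (u^2(t,x) + u_x^2(t,x))\,dx = 2c_1^2 + 2c_2^2$, where $u_x$ denotes the a.e. derivative of $u$ in $x$. -/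
/-!
Between and outside the peaks `u` is a combination of `e^x` and `e^(-x)` with `u_x = ±u` outside,
so the energy density is a combination of `e^(2x)` and `e^(-2x)` on each of the three pieces, and
integrating gives `2 p₁² + 2 p₂² + 4 p₁ p₂ e^(q₁ - q₂)` (the `H¹` Gram matrix of two peakons).
With `E = e^(L (t - t₀))` one has `e^(q₁ - q₂) = L² E / ((c₁ - c₂ E) (c₁ E - c₂))`, which is `< 1`
for `t < t₀`, so the peaks are ordered, and `p₁ p₂ e^(q₁ - q₂) = -L² E / (1 - E)²`, which makes
the energy collapse to `2 c₁² + 2 c₂²`.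
-/

open Real MeasureTheory Set

theorem integral_eq_add_add_of_eqOn_Iio_Ico_Ici {f g₁ g₂ g₃ : ℝ → ℝ} {a b : ℝ} (hab : a ≤ b)
    (h₁ : EqOn f g₁ (Iio a)) (h₂ : EqOn f g₂ (Ico a b)) (h₃ : EqOn f g₃ (Ici b))
    (hg₁ : IntegrableOn g₁ (Iio a)) (hg₂ : IntegrableOn g₂ (Ico a b))
    (hg₃ : IntegrableOn g₃ (Ici b)) :
    ∫ x, f x = (∫ x in Iio a, g₁ x) + (∫ x in Ico a b, g₂ x) + ∫ x in Ici b, g₃ x := by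
  have hf₂ := hg₂.congr_fun h₂.symm measurableSet_Ico
  have hf₃ := hg₃.congr_fun h₃.symm measurableSet_Ici
  rw [← intervalIntegral.integral_Iio_add_Ici (hg₁.congr_fun h₁.symm measurableSet_Iio)
      (Ico_union_Ici_eq_Ici hab ▸ hf₂.union hf₃), ← Ico_union_Ici_eq_Ici hab,
    setIntegral_union ((Iio_disjoint_Ici le_rfl).mono_left Ico_subset_Iio_self)
      measurableSet_Ici hf₂ hf₃,
    setIntegral_congr_fun measurableSet_Iio h₁, setIntegral_congr_fun measurableSet_Ico h₂,
    setIntegral_congr_fun measurableSet_Ici h₃, add_assoc]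

theorem intervalIntegral.integral_exp_mul {c : ℝ} (hc : c ≠ 0) (a b : ℝ) :
    ∫ x in a..b, exp (c * x) = (exp (c * b) - exp (c * a)) / c := by
  rw [intervalIntegral.integral_comp_mul_left exp hc, integral_exp, smul_eq_mul, inv_mul_eq_div]

noncomputable section TwoPeakon

variable (P Q a b : ℝ)

def twoPeakon (x : ℝ) : ℝ := P * exp (-|x - a|) + Q * exp (-|x - b|)

/-- The a.e. derivative of `twoPeakon` when `a ≤ b`; its values at the peaks are irrelevant. -/
def twoPeakonDeriv (x : ℝ) : ℝ :=
  if x < a then twoPeakon P Q a b x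
  else if x < b then Q * exp (x - b) - P * exp (a - x)
  else -twoPeakon P Q a b x

variable {P Q a b}

theorem twoPeakon_energy_eqOn_Iio (hab : a ≤ b) :
    EqOn (fun x => twoPeakon P Q a b x ^ 2 + twoPeakonDeriv P Q a b x ^ 2)
      (fun x => 2 * (P * exp (-a) + Q * exp (-b)) ^ 2 * exp (2 * x)) (Iio a) := by
  intro x (hx : x < a)
  simp only [twoPeakonDeriv, if_pos hx, twoPeakon, abs_of_neg (sub_neg.2 hx),
    abs_of_neg (sub_neg.2 (hx.trans_le hab)), neg_sub, exp_sub, exp_neg, two_mul, exp_add]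
  field_simp

theorem twoPeakon_energy_eqOn_Ico :
    EqOn (fun x => twoPeakon P Q a b x ^ 2 + twoPeakonDeriv P Q a b x ^ 2)
      (fun x => 2 * P ^ 2 * exp (2 * a) * exp (-2 * x) + 2 * Q ^ 2 * exp (-2 * b) * exp (2 * x))
      (Ico a b) := by
  rintro x ⟨hax, hxb⟩
  simp only [twoPeakonDeriv, if_neg hax.not_gt, if_pos hxb, twoPeakon,
    abs_of_nonneg (sub_nonneg.2 hax), abs_of_neg (sub_neg.2 hxb), neg_sub, exp_sub, exp_neg,
    neg_mul, two_mul, exp_add]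
  field_simp
  ring

theorem twoPeakon_energy_eqOn_Ici (hab : a ≤ b) :
    EqOn (fun x => twoPeakon P Q a b x ^ 2 + twoPeakonDeriv P Q a b x ^ 2)
      (fun x => 2 * (P * exp a + Q * exp b) ^ 2 * exp (-2 * x)) (Ici b) := by
  intro x (hx : b ≤ x)
  simp only [twoPeakonDeriv, if_neg (hab.trans hx).not_gt, if_neg hx.not_gt, twoPeakon,
    abs_of_nonneg (sub_nonneg.2 hx), abs_of_nonneg (sub_nonneg.2 (hab.trans hx)), neg_sub,
    exp_sub, exp_neg, neg_mul, two_mul, exp_add]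
  field_simp

theorem integral_twoPeakon_energy (hab : a ≤ b) :
    ∫ x, twoPeakon P Q a b x ^ 2 + twoPeakonDeriv P Q a b x ^ 2 =
      2 * P ^ 2 + 2 * Q ^ 2 + 4 * P * Q * exp (a - b) := by
  have hneg : (-2 : ℝ) < 0 := by norm_num
  have h_left : ∫ x in Iio a, 2 * (P * exp (-a) + Q * exp (-b)) ^ 2 * exp (2 * x) =
      (P * exp (-a) + Q * exp (-b)) ^ 2 * exp (2 * a) := by
    rw [setIntegral_congr_set Iio_ae_eq_Iic, integral_const_mul, integral_exp_mul_Iic two_pos]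
    ring
  have h_mid : ∫ x in Ico a b,
      2 * P ^ 2 * exp (2 * a) * exp (-2 * x) + 2 * Q ^ 2 * exp (-2 * b) * exp (2 * x) =
      P ^ 2 * exp (2 * a) * (exp (-2 * a) - exp (-2 * b)) +
        Q ^ 2 * exp (-2 * b) * (exp (2 * b) - exp (2 * a)) := by
    rw [setIntegral_congr_set Ico_ae_eq_Ioc, ← intervalIntegral.integral_of_le hab,
      intervalIntegral.integral_add ((by fun_prop : Continuous _).intervalIntegrable _ _)
        ((by fun_prop : Continuous _).intervalIntegrable _ _),
      intervalIntegral.integral_const_mul, intervalIntegral.integral_const_mul,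
      intervalIntegral.integral_exp_mul hneg.ne, intervalIntegral.integral_exp_mul two_ne_zero]
    ring
  have h_right : ∫ x in Ici b, 2 * (P * exp a + Q * exp b) ^ 2 * exp (-2 * x) =
      (P * exp a + Q * exp b) ^ 2 * exp (-2 * b) := by
    rw [← setIntegral_congr_set Ioi_ae_eq_Ici, integral_const_mul, integral_exp_mul_Ioi hneg]
    ring
  rw [integral_eq_add_add_of_eqOn_Iio_Ico_Ici hab (twoPeakon_energy_eqOn_Iio hab)
    twoPeakon_energy_eqOn_Ico (twoPeakon_energy_eqOn_Ici hab), h_left, h_mid, h_right]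
  · simp only [exp_neg, exp_sub, neg_mul, two_mul, exp_add]
    field_simp
    ring
  · exact ((integrableOn_exp_mul_Iic two_pos a).mono_set Iio_subset_Iic_self).const_mul _
  · exact (Continuous.integrableOn_Icc (by fun_prop)).mono_set Ico_subset_Icc_self
  · rw [integrableOn_Ici_iff_integrableOn_Ioi]
    exact (integrableOn_exp_mul_Ioi hneg b).const_mul _

end TwoPeakon

section PeakonAntipeakon

variable {c₁ c₂ : ℝ}

theorem exp_sub_peakon_antipeakon_positions (hc₁ : 0 < c₁) (hc₂ : c₂ < 0) (s : ℝ) :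
    exp ((log (c₁ - c₂) + c₁ * s - log (c₁ - c₂ * exp ((c₁ - c₂) * s))) -
        (-log (c₁ - c₂) + c₂ * s + log (c₁ * exp ((c₁ - c₂) * s) - c₂))) =
      (c₁ - c₂) ^ 2 * exp ((c₁ - c₂) * s) /
        ((c₁ - c₂ * exp ((c₁ - c₂) * s)) * (c₁ * exp ((c₁ - c₂) * s) - c₂)) := by
  set E := exp ((c₁ - c₂) * s) with hE_def
  have hE : E = exp (c₁ * s) / exp (c₂ * s) := by rw [hE_def, ← exp_sub, sub_mul]
  have hA : 0 < c₁ - c₂ * E := by nlinarith [exp_pos ((c₁ - c₂) * s)]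
  have hB : 0 < c₁ * E - c₂ := by nlinarith [exp_pos ((c₁ - c₂) * s)]
  simp only [exp_sub, exp_add, exp_neg, exp_log hA, exp_log hB,
    exp_log (sub_pos.2 (hc₂.trans hc₁))]
  rw [hE]
  field_simp

theorem peakon_antipeakon_overlap_lt_one (hc₁ : 0 < c₁) (hc₂ : c₂ < 0) {E : ℝ} (hE₀ : 0 < E)
    (hE₁ : E < 1) : (c₁ - c₂) ^ 2 * E / ((c₁ - c₂ * E) * (c₁ * E - c₂)) < 1 := by
  have hA : 0 < c₁ - c₂ * E := by nlinarith
  have hB : 0 < c₁ * E - c₂ := by nlinarith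
  rw [div_lt_one (mul_pos hA hB)]
  nlinarith [mul_pos (mul_pos hc₁ (neg_pos.2 hc₂)) (pow_pos (sub_pos.2 hE₁) 2)]

theorem peakon_antipeakon_energy_identity {E : ℝ} (hE : E ≠ 1) (hA : c₁ - c₂ * E ≠ 0)
    (hB : c₁ * E - c₂ ≠ 0) :
    2 * ((c₁ - c₂ * E) / (1 - E)) ^ 2 + 2 * ((c₂ - c₁ * E) / (1 - E)) ^ 2 +
      4 * ((c₁ - c₂ * E) / (1 - E)) * ((c₂ - c₁ * E) / (1 - E)) *
        ((c₁ - c₂) ^ 2 * E / ((c₁ - c₂ * E) * (c₁ * E - c₂))) = 2 * c₁ ^ 2 + 2 * c₂ ^ 2 := by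
  have hE' : 1 - E ≠ 0 := sub_ne_zero.2 hE.symm
  field_simp
  ring

end PeakonAntipeakon

theorem peakon_antipeakon_energy_general (c₁ c₂ t₀ : ℝ) (hc₁ : c₁ > 0) (hc₂ : 0 > c₂)
    (L : ℝ) (hL : L = c₁ - c₂)
    (p₁ p₂ q₁ q₂ : ℝ → ℝ)
    (hp₁ : ∀ t, p₁ t = (c₁ - c₂ * exp (L * (t - t₀))) / (1 - exp (L * (t - t₀))))
    (hp₂ : ∀ t, p₂ t = (c₂ - c₁ * exp (L * (t - t₀))) / (1 - exp (L * (t - t₀))))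
    (hq₁ : ∀ t, q₁ t = Real.log L + c₁ * (t - t₀) - Real.log (c₁ - c₂ * exp (L * (t - t₀))))
    (hq₂ : ∀ t, q₂ t = -Real.log L + c₂ * (t - t₀) + Real.log (c₁ * exp (L * (t - t₀)) - c₂))
    (u ux : ℝ → ℝ → ℝ)
    (hu : ∀ t x, u t x = p₁ t * exp (-|x - q₁ t|) + p₂ t * exp (-|x - q₂ t|))
    (hux : ∀ t x, ux t x =
      if x < q₁ t then u t x
      else if x < q₂ t then p₂ t * exp (x - q₂ t) - p₁ t * exp (q₁ t - x)
      else -u t x) :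
    ∀ t < t₀, ∫ x : ℝ, ((u t x) ^ 2 + (ux t x) ^ 2) = 2 * c₁ ^ 2 + 2 * c₂ ^ 2 := by
  subst hL
  intro t ht
  set E := exp ((c₁ - c₂) * (t - t₀))
  have hE₀ : 0 < E := exp_pos _
  have hE₁ : E < 1 := exp_lt_one_iff.2 (mul_neg_of_pos_of_neg (by linarith) (by linarith))
  have h_overlap : exp (q₁ t - q₂ t) = (c₁ - c₂) ^ 2 * E / ((c₁ - c₂ * E) * (c₁ * E - c₂)) := by
    rw [hq₁, hq₂]
    exact exp_sub_peakon_antipeakon_positions hc₁ hc₂ _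
  have h_order : q₁ t ≤ q₂ t := by
    have := h_overlap ▸ peakon_antipeakon_overlap_lt_one hc₁ hc₂ hE₀ hE₁
    exact sub_nonpos.1 (exp_lt_one_iff.1 this).le
  have hu_t : u t = twoPeakon (p₁ t) (p₂ t) (q₁ t) (q₂ t) := funext (hu t)
  have hux_t : ux t = twoPeakonDeriv (p₁ t) (p₂ t) (q₁ t) (q₂ t) := by
    funext x
    rw [hux, hu_t]
    rfl
  rw [hu_t, hux_t, integral_twoPeakon_energy h_order, h_overlap, hp₁, hp₂]
  exact peakon_antipeakon_energy_identity hE₁.ne (by nlinarith) (by nlinarith)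

theorem peakon_antipeakon_energy (c₁ c₂ t₀ : ℝ) (hc₁ : c₁ > 0) (hc₂ : 0 > c₂) (ht₀ : t₀ > 0)
    (L : ℝ) (hL : L = c₁ - c₂)
    (p₁ p₂ q₁ q₂ : ℝ → ℝ)
    (hp₁ : ∀ t, p₁ t = (c₁ - c₂ * exp (L * (t - t₀))) / (1 - exp (L * (t - t₀))))
    (hp₂ : ∀ t, p₂ t = (c₂ - c₁ * exp (L * (t - t₀))) / (1 - exp (L * (t - t₀))))
    (hq₁ : ∀ t, q₁ t = Real.log L + c₁ * (t - t₀) - Real.log (c₁ - c₂ * exp (L * (t - t₀))))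
    (hq₂ : ∀ t, q₂ t = -Real.log L + c₂ * (t - t₀) + Real.log (c₁ * exp (L * (t - t₀)) - c₂))
    (u ux : ℝ → ℝ → ℝ)
    (hu : ∀ t x, u t x = p₁ t * exp (-|x - q₁ t|) + p₂ t * exp (-|x - q₂ t|))
    (hux : ∀ t x, ux t x =
      if x < q₁ t then u t x
      else if x < q₂ t then p₂ t * exp (x - q₂ t) - p₁ t * exp (q₁ t - x)
      else -u t x) :
    ∀ t < t₀, ∫ x : ℝ, ((u t x) ^ 2 + (ux t x) ^ 2) = 2 * c₁ ^ 2 + 2 * c₂ ^ 2 :=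
  peakon_antipeakon_energy_general c₁ c₂ t₀ hc₁ hc₂ L hL p₁ p₂ q₁ q₂ hp₁ hp₂ hq₁ hq₂ u ux hu hux
end

section
/- Fix $b > 0$ and $a \in \mathbb{R}$ with $a > 0$, and consider the ODE $x'(t) = r(t)(e^{c_1(t-t_0)} - e^{-c_2(t-t_0)} x(t)^2)$ where $r(t) = L/(1 - e^{L(t-t_0)})$, $c_1 > 0 > c_2$, $L = c_1 - c_2$, on $t < t_0$. The substitution $v(t) = -r(t) e^{-c_2(t-t_0)} x(t)$ transforms the equation into the Riccati equation $v'(t) = -R'(t) + R(t) v(t) + v(t)^2$ with $R(t) = (c_1 e^{L(t-t_0)} - c_2)/(1 - e^{L(t-t_0)})$. -/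
open Real

/-!
Writing `v = -r b x`, the product rule turns `x' = r (a - b x²)` into
`v' = (r'/r + b'/b) v + v² - r² a b`. Here `a = e^{c₁(t-t₀)}` and `b = e^{-c₂(t-t₀)}`, so
`b'/b = -c₂` and `a b = E := e^{L(t-t₀)}`; with `r = L/(1 - E)` this gives
`r' = L² E/(1 - E)² = r² a b = R'` and `r'/r - c₂ = (L E - c₂ (1 - E))/(1 - E) = R`.
-/

theorem HasDerivAt.riccati_substitution {r b x : ℝ → ℝ} {r' b' a t : ℝ}
    (hr : HasDerivAt r r' t) (hb : HasDerivAt b b' t)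
    (hx : HasDerivAt x (r t * (a - b t * x t ^ 2)) t) (hr₀ : r t ≠ 0) (hb₀ : b t ≠ 0) :
    HasDerivAt (fun s => -r s * b s * x s)
      (-(r t ^ 2 * a * b t) + (r' / r t + b' / b t) * (-r t * b t * x t) +
        (-r t * b t * x t) ^ 2) t := by
  refine ((hr.neg.mul hb).mul hx).congr_deriv ?_
  simp only [Pi.neg_apply, Pi.mul_apply]
  field_simp
  ring

theorem hasDerivAt_exp_mul_sub (c t₀ t : ℝ) :
    HasDerivAt (fun s => exp (c * (s - t₀))) (c * exp (c * (t - t₀))) t := by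
  refine (((hasDerivAt_id t).sub_const t₀).const_mul c).exp.congr_deriv ?_
  simp [mul_comm]

theorem hasDerivAt_const_div_one_sub_exp (L t₀ t : ℝ) (h : 1 - exp (L * (t - t₀)) ≠ 0) :
    HasDerivAt (fun s => L / (1 - exp (L * (s - t₀))))
      (L ^ 2 * exp (L * (t - t₀)) / (1 - exp (L * (t - t₀))) ^ 2) t := by
  have hden := (hasDerivAt_exp_mul_sub L t₀ t).const_sub 1
  refine ((hasDerivAt_const t L).div hden h).congr_deriv ?_
  ring

theorem riccati_transformation (c₁ c₂ t₀ : ℝ) (hc₁ : c₁ > 0) (hc₂ : 0 > c₂)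
    (L : ℝ) (hL : L = c₁ - c₂)
    (r R R' : ℝ → ℝ)
    (hr : ∀ t, r t = L / (1 - exp (L * (t - t₀))))
    (hR : ∀ t, R t = (c₁ * exp (L * (t - t₀)) - c₂) / (1 - exp (L * (t - t₀))))
    (hR' : ∀ t, R' t = L ^ 2 * exp (L * (t - t₀)) / (1 - exp (L * (t - t₀))) ^ 2)
    (x : ℝ → ℝ)
    (hx : ∀ t < t₀, HasDerivAt x
      (r t * (exp (c₁ * (t - t₀)) - exp (-c₂ * (t - t₀)) * (x t) ^ 2)) t)
    (v : ℝ → ℝ)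
    (hv : ∀ t, v t = -r t * exp (-c₂ * (t - t₀)) * x t) :
    ∀ t < t₀, HasDerivAt v (-R' t + R t * v t + (v t) ^ 2) t := by
  intro t ht
  have hL₀ : 0 < L := by linarith
  have hD : 1 - exp (L * (t - t₀)) ≠ 0 :=
    (sub_pos.2 (exp_lt_one_iff.2 (mul_neg_of_pos_of_neg hL₀ (sub_neg.2 ht)))).ne'
  have hr₀ : r t ≠ 0 := by rw [hr]; exact div_ne_zero hL₀.ne' hD
  have hr' : HasDerivAt r (R' t) t := by
    rw [funext hr, hR']; exact hasDerivAt_const_div_one_sub_exp L t₀ t hD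
  have hsplit : exp (c₁ * (t - t₀)) * exp (-c₂ * (t - t₀)) = exp (L * (t - t₀)) := by
    rw [← exp_add, hL]; ring_nf
  have hforcing : r t ^ 2 * exp (c₁ * (t - t₀)) * exp (-c₂ * (t - t₀)) = R' t := by
    rw [mul_assoc, hsplit, hr, hR', div_pow, div_mul_eq_mul_div]
  have hcoeff : R' t / r t + -c₂ * exp (-c₂ * (t - t₀)) / exp (-c₂ * (t - t₀)) = R t := by
    rw [hr, hR', hR, mul_div_cancel_right₀ _ (exp_ne_zero _)]
    field_simp
    rw [hL]; ring
  have h := hr'.riccati_substitution (hasDerivAt_exp_mul_sub (-c₂) t₀ t) (hx t ht) hr₀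
    (exp_ne_zero _)
  rw [hforcing, hcoeff, ← hv] at h
  rwa [← funext hv] at h
end

section
/- For $c_1 > 0 > c_2$, $L = c_1 - c_2$, $t_0 > 0$, the integral of the Lagrangian energy density at breaking time over the concentration interval equals the concentrated energy: $\int_{q_1(0)}^{q_2(0)} \frac{4 c_1^2 c_2^2 (1 - e^{-L t_0})^2 e^{\xi}}{\big(L e^{-c_1 t_0} + c_2 - c_1 e^{-L t_0} + (-c_1 + c_2 e^{-L t_0} + L e^{c_2 t_0}) e^{\xi}\big)^2}\, d\xi = -4 c_1 c_2$, where $q_1(0), q_2(0)$ are the values at $t = 0$ of $q_1(t) = \ln L + c_1(t - t_0) - \ln(c_1 - c_2 e^{L(t-t_0)})$ and $q_2(t) = -\ln L + c_2(t - t_0) + \ln(c_1 e^{L(t-t_0)} - c_2)$. -/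
open Real

theorem aux_energy_div (Kv B E l d P c : ℝ) (hB : B ≠ 0) (hE : E ≠ 0) (hl : l ≠ 0) (hd : d ≠ 0)
    (hP : P ≠ 0) (hrel : B * E = -d * E + l) (hKc : Kv = c * P) :
    -Kv / (B * (P * E / l)) - -Kv / (B * (P / d)) = -c := by
  subst hKc
  field_simp
  linear_combination c * hrel

set_option maxHeartbeats 1000000 in
theorem concentrated_energy_lagrangian (c₁ c₂ t₀ : ℝ) (hc₁ : c₁ > 0) (hc₂ : 0 > c₂)
    (ht₀ : t₀ > 0) (L : ℝ) (hL : L = c₁ - c₂)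
    (q₁0 q₂0 : ℝ)
    (hq₁0 : q₁0 = Real.log L + c₁ * (0 - t₀) - Real.log (c₁ - c₂ * exp (L * (0 - t₀))))
    (hq₂0 : q₂0 = -Real.log L + c₂ * (0 - t₀) + Real.log (c₁ * exp (L * (0 - t₀)) - c₂)) :
    ∫ ξ in q₁0..q₂0,
      4 * c₁ ^ 2 * c₂ ^ 2 * (1 - exp (-L * t₀)) ^ 2 * exp ξ /
        (L * exp (-c₁ * t₀) + c₂ - c₁ * exp (-L * t₀)
          + (-c₁ + c₂ * exp (-L * t₀) + L * exp (c₂ * t₀)) * exp ξ) ^ 2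
      = -4 * c₁ * c₂ := by
  subst hL
  have hL0 : (0:ℝ) < c₁ - c₂ := by linarith
  set u := Real.exp (-(c₁ - c₂) * t₀) with hu
  set E := Real.exp (-c₂ * t₀) with hE
  have hu0 : 0 < u := Real.exp_pos _
  have hu1 : u < 1 := by
    rw [hu]; apply Real.exp_lt_one_iff.mpr; nlinarith
  have hE1 : 1 < E := by
    rw [hE]; apply Real.one_lt_exp_iff.mpr; nlinarith
  have hE0 : 0 < E := by linarith
  have hc1E : Real.exp (-c₁ * t₀) = u * E := by
    rw [hu, hE, ← Real.exp_add]; congr 1; ring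
  have hsE : Real.exp (c₂ * t₀) = E⁻¹ := by
    rw [hE, ← Real.exp_neg]; congr 1; ring
  have hBneg : -c₁ + c₂ * u + (c₁ - c₂) * Real.exp (c₂ * t₀) < 0 := by
    rw [hsE]
    have h1 : 1 - c₁ * t₀ < u * E := by
      rw [← hc1E]; nlinarith [Real.add_one_lt_exp (show -c₁*t₀ ≠ 0 by nlinarith)]
    have h2 : 1 + (-c₂ * t₀) ≤ E := by
      rw [hE]; have := Real.add_one_le_exp (-c₂ * t₀); linarith
    have hEi : E * E⁻¹ = 1 := mul_inv_cancel₀ (ne_of_gt hE0)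
    nlinarith [mul_pos hE0 ht₀, mul_pos (mul_pos hE0 hE0) ht₀,
      mul_lt_mul_of_pos_right h1 (mul_pos hE0 ht₀), mul_pos hu0 hE0,
      mul_pos hE0 hE0]
  have hD1 : 0 < c₁ - c₂ * u := by nlinarith
  have hD2 : 0 < c₁ * u - c₂ := by nlinarith
  have h1u : 0 < (1 - u) ^ 2 := pow_pos (by linarith) 2
  have hcc : c₁ * c₂ < 0 := mul_neg_of_pos_of_neg hc₁ hc₂
  have hLrw : Real.exp ((c₁ - c₂) * (0 - t₀)) = u := by rw [hu]; congr 1; ring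
  rw [hLrw] at hq₁0 hq₂0
  have hq1e : Real.exp q₁0 = (c₁ - c₂) * (u * E) / (c₁ - c₂ * u) := by
    rw [hq₁0, Real.exp_sub, Real.exp_add, Real.exp_log hL0, Real.exp_log hD1,
      show c₁ * (0 - t₀) = -c₁ * t₀ by ring, hc1E]
  have hq2e : Real.exp q₂0 = E * (c₁ * u - c₂) / (c₁ - c₂) := by
    rw [hq₂0, Real.exp_add, Real.exp_add, Real.exp_neg, Real.exp_log hL0, Real.exp_log hD2,
      show c₂ * (0 - t₀) = -c₂ * t₀ by ring, ← hE]
    ring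
  set A := (c₁ - c₂) * Real.exp (-c₁ * t₀) + c₂ - c₁ * u with hA
  set B := -c₁ + c₂ * u + (c₁ - c₂) * Real.exp (c₂ * t₀) with hB
  set K := 4 * c₁ ^ 2 * c₂ ^ 2 * (1 - u) ^ 2 with hK
  have hBne : B ≠ 0 := ne_of_lt hBneg
  have hAB1 : A + B * Real.exp q₁0 = c₁ * c₂ * (1 - u) ^ 2 / (c₁ - c₂ * u) := by
    rw [hA, hB, hq1e, hsE, hc1E]
    field_simp
    ring
  have hAB2 : A + B * Real.exp q₂0 = c₁ * c₂ * (1 - u) ^ 2 * E / (c₁ - c₂) := by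
    rw [hA, hB, hq2e, hsE, hc1E]
    field_simp
    ring
  have hneg1 : A + B * Real.exp q₁0 < 0 := by
    rw [hAB1]; exact div_neg_of_neg_of_pos (mul_neg_of_neg_of_pos hcc h1u) hD1
  have hneg2 : A + B * Real.exp q₂0 < 0 := by
    rw [hAB2]; exact div_neg_of_neg_of_pos (mul_neg_of_neg_of_pos (mul_neg_of_neg_of_pos hcc h1u) hE0) hL0
  have key : ∀ ξ ∈ Set.uIcc q₁0 q₂0, A + B * Real.exp ξ < 0 := by
    intro ξ hξ
    rw [Set.mem_uIcc] at hξ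
    rcases hξ with ⟨h1, _⟩ | ⟨h1, _⟩
    · nlinarith [mul_le_mul_of_nonpos_left (Real.exp_le_exp.mpr h1) hBneg.le]
    · nlinarith [mul_le_mul_of_nonpos_left (Real.exp_le_exp.mpr h1) hBneg.le]
  have hderiv : ∀ ξ ∈ Set.uIcc q₁0 q₂0,
      HasDerivAt (fun x => -K / (B * (A + B * Real.exp x)))
        (K * Real.exp ξ / (A + B * Real.exp ξ) ^ 2) ξ := by
    intro ξ hξ
    have hne : A + B * Real.exp ξ ≠ 0 := (key ξ hξ).ne
    have h1 : HasDerivAt (fun x => B * (A + B * Real.exp x)) (B * (B * Real.exp ξ)) ξ :=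
      (((Real.hasDerivAt_exp ξ).const_mul B).const_add A).const_mul B
    have h2 := (h1.inv (mul_ne_zero hBne hne)).const_mul (-K)
    have heq : (fun x => -K / (B * (A + B * Real.exp x)))
        = fun x => -K * (B * (A + B * Real.exp x))⁻¹ := by
      funext x; rw [div_eq_mul_inv]
    rw [heq]
    refine h2.congr_deriv ?_
    field_simp
  have hcont : IntervalIntegrable (fun ξ => K * Real.exp ξ / (A + B * Real.exp ξ) ^ 2)
      MeasureTheory.volume q₁0 q₂0 := by
    apply ContinuousOn.intervalIntegrable
    apply ContinuousOn.div (by fun_prop) (by fun_prop)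
    intro ξ hξ
    exact pow_ne_zero 2 (key ξ hξ).ne
  rw [intervalIntegral.integral_eq_sub_of_hasDerivAt hderiv hcont, hAB1, hAB2]
  have hBE : B * E = -(c₁ - c₂ * u) * E + (c₁ - c₂) := by
    rw [hB, hsE]
    linear_combination (c₁ - c₂) * inv_mul_cancel₀ (ne_of_gt hE0)
  rw [show (-4 * c₁ * c₂ : ℝ) = -(4 * c₁ * c₂) by ring]
  exact aux_energy_div K B E (c₁ - c₂) (c₁ - c₂ * u) (c₁ * c₂ * (1 - u) ^ 2) (4 * c₁ * c₂)
    hBne (ne_of_gt hE0) (ne_of_gt hL0) (ne_of_gt hD1)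
    (mul_ne_zero (ne_of_lt hcc) (ne_of_gt h1u)) hBE (by rw [hK]; ring)
end

section
/- For $c_1 > 0 > c_2$, $\alpha \in [0,1)$, with $d_1, d_2$ the $\alpha$-dissipative continuation constants and $\tilde L = d_1 - d_2$, the post-breaking positions $\tilde q_1(t) = \ln \tilde L + d_2(t-t_0) - \ln(d_1 e^{-\tilde L(t-t_0)} - d_2)$ and $\tilde q_2(t) = -\ln \tilde L + d_1(t-t_0) + \ln(d_1 - d_2 e^{-\tilde L(t-t_0)})$ satisfy $\tilde q_1(t) \le \tilde q_2(t)$ for all $t \ge t_0$, with equality iff $t = t_0$, and both tend to $0$ as $t \to t_0^+$. -/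
set_option maxHeartbeats 1000000


open Real Filter

theorem post_breaking_positions (c₁ c₂ α t₀ : ℝ) (hc₁ : c₁ > 0) (hc₂ : 0 > c₂)
    (hα : α ∈ Set.Ico (0 : ℝ) 1)
    (d₁ d₂ : ℝ)
    (hd₁ : d₁ = (1 / 2) * (c₁ + c₂) + Real.sqrt ((1 / 4) * (c₁ + c₂) ^ 2 - (1 - α) * c₁ * c₂))
    (hd₂ : d₂ = (1 / 2) * (c₁ + c₂) - Real.sqrt ((1 / 4) * (c₁ + c₂) ^ 2 - (1 - α) * c₁ * c₂))
    (Lt : ℝ) (hLt : Lt = d₁ - d₂)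
    (q₁ q₂ : ℝ → ℝ)
    (hq₁ : ∀ t, q₁ t = Real.log Lt + d₂ * (t - t₀)
      - Real.log (d₁ * exp (-Lt * (t - t₀)) - d₂))
    (hq₂ : ∀ t, q₂ t = -Real.log Lt + d₁ * (t - t₀)
      + Real.log (d₁ - d₂ * exp (-Lt * (t - t₀)))) :
    (∀ t ≥ t₀, q₁ t ≤ q₂ t) ∧
    (∀ t ≥ t₀, (q₁ t = q₂ t ↔ t = t₀)) ∧
    Tendsto q₁ (nhdsWithin t₀ (Set.Ioi t₀)) (nhds 0) ∧
    Tendsto q₂ (nhdsWithin t₀ (Set.Ioi t₀)) (nhds 0) := by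
  obtain ⟨hα0, hα1⟩ := hα
  have hc₁c₂ : c₁ * c₂ < 0 := mul_neg_of_pos_of_neg hc₁ hc₂
  have h1α : (0:ℝ) < 1 - α := by linarith
  set D := (1 / 4) * (c₁ + c₂) ^ 2 - (1 - α) * c₁ * c₂ with hD
  have hDgt : ((1/2) * (c₁ + c₂))^2 < D := by
    have h := mul_pos h1α (neg_pos.mpr hc₁c₂)
    rw [hD]; nlinarith
  have hsq : |(1/2) * (c₁+c₂)| < Real.sqrt D := by
    rw [← Real.sqrt_sq_eq_abs]
    exact Real.sqrt_lt_sqrt (sq_nonneg _) hDgt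
  have habs1 := neg_abs_le ((1/2) * (c₁+c₂))
  have habs2 := le_abs_self ((1/2) * (c₁+c₂))
  have hd₁pos : 0 < d₁ := by rw [hd₁]; linarith
  have hd₂neg : d₂ < 0 := by rw [hd₂]; linarith
  have hL : 0 < Lt := by rw [hLt]; linarith
  subst hLt
  -- basic per-t facts
  have hA : ∀ t : ℝ, 0 < d₁ - d₂ * exp (-(d₁ - d₂) * (t - t₀)) := fun t => by
    have := Real.exp_pos (-(d₁ - d₂) * (t - t₀)); nlinarith
  have hB : ∀ t : ℝ, 0 < d₁ * exp (-(d₁ - d₂) * (t - t₀)) - d₂ := fun t => by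
    have := Real.exp_pos (-(d₁ - d₂) * (t - t₀)); nlinarith
  have huv : ∀ t : ℝ, exp (-(d₁ - d₂) * (t - t₀)) * exp ((d₁ - d₂) * (t - t₀)) = 1 := fun t => by
    rw [← Real.exp_add]; ring_nf; exact Real.exp_zero
  have key : ∀ t : ℝ,
      (d₁ - d₂ * exp (-(d₁ - d₂) * (t - t₀))) * (d₁ * exp (-(d₁ - d₂) * (t - t₀)) - d₂)
        * exp ((d₁ - d₂) * (t - t₀))
      = (d₁ - d₂)^2 - d₁ * d₂ * (exp ((d₁ - d₂) * (t - t₀)) + exp (-(d₁ - d₂) * (t - t₀)) - 2) := by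
    intro t
    linear_combination (d₁^2 + d₂^2 - d₁ * d₂ * exp (-(d₁ - d₂) * (t - t₀))) * huv t
  have hcosh : ∀ t : ℝ, 2 ≤ exp ((d₁ - d₂) * (t - t₀)) + exp (-(d₁ - d₂) * (t - t₀)) := fun t => by
    have h1 := Real.add_one_le_exp ((d₁ - d₂) * (t - t₀))
    have h2 := Real.add_one_le_exp (-(d₁ - d₂) * (t - t₀))
    nlinarith
  have hdiff : ∀ t : ℝ, q₂ t - q₁ t
      = Real.log ((d₁ - d₂ * exp (-(d₁ - d₂) * (t - t₀))) * (d₁ * exp (-(d₁ - d₂) * (t - t₀)) - d₂)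
          * exp ((d₁ - d₂) * (t - t₀))) - Real.log ((d₁ - d₂)^2) := by
    intro t
    rw [hq₁ t, hq₂ t,
      Real.log_mul (mul_pos (hA t) (hB t)).ne' (Real.exp_ne_zero _),
      Real.log_mul (hA t).ne' (hB t).ne', Real.log_exp]
    have : Real.log ((d₁ - d₂)^2) = 2 * Real.log (d₁ - d₂) := by
      rw [sq, Real.log_mul hL.ne' hL.ne']; ring
    rw [this]; ring
  have hdpos : 0 < -(d₁ * d₂) := by nlinarith
  have hle : ∀ t : ℝ, q₁ t ≤ q₂ t := by
    intro t
    have hk := key t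
    have hc := hcosh t
    have hprod : (d₁ - d₂)^2 ≤ (d₁ - d₂ * exp (-(d₁ - d₂) * (t - t₀)))
        * (d₁ * exp (-(d₁ - d₂) * (t - t₀)) - d₂) * exp ((d₁ - d₂) * (t - t₀)) := by
      have hm := mul_nonneg hdpos.le (by linarith :
        (0:ℝ) ≤ exp ((d₁ - d₂) * (t - t₀)) + exp (-(d₁ - d₂) * (t - t₀)) - 2)
      nlinarith [hm, hk]
    have := Real.log_le_log (by positivity) hprod
    have hd := hdiff t
    linarith
  refine ⟨fun t _ => hle t, fun t ht => ⟨?_, ?_⟩, ?_, ?_⟩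
  · intro heq
    by_contra hne
    have htgt : t₀ < t := lt_of_le_of_ne ht (Ne.symm hne)
    have hs : 0 < (d₁ - d₂) * (t - t₀) := mul_pos hL (by linarith)
    have h1 := Real.add_one_lt_exp hs.ne'
    have h2 := Real.add_one_le_exp (-(d₁ - d₂) * (t - t₀))
    have hcoshlt : 2 < exp ((d₁ - d₂) * (t - t₀)) + exp (-(d₁ - d₂) * (t - t₀)) := by linarith
    have hk := key t
    have hprod : (d₁ - d₂)^2 < (d₁ - d₂ * exp (-(d₁ - d₂) * (t - t₀)))
        * (d₁ * exp (-(d₁ - d₂) * (t - t₀)) - d₂) * exp ((d₁ - d₂) * (t - t₀)) := by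
      have hm := mul_nonneg hdpos.le (by linarith :
        (0:ℝ) ≤ exp ((d₁ - d₂) * (t - t₀)) + exp (-(d₁ - d₂) * (t - t₀)) - 2)
      nlinarith [hm, hk]
    have hlog := Real.log_lt_log (by positivity) hprod
    have hd := hdiff t
    linarith
  · rintro rfl
    rw [hq₁, hq₂]
    simp
  · have hcont : ContinuousAt (fun t => Real.log (d₁ - d₂) + d₂ * (t - t₀)
        - Real.log (d₁ * exp (-(d₁ - d₂) * (t - t₀)) - d₂)) t₀ := by
      apply ContinuousAt.sub
      · fun_prop
      · exact ContinuousAt.log (by fun_prop) (by simpa using (hB t₀).ne')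
    have heq : q₁ = fun t => Real.log (d₁ - d₂) + d₂ * (t - t₀)
        - Real.log (d₁ * exp (-(d₁ - d₂) * (t - t₀)) - d₂) := funext hq₁
    rw [heq]
    have h2 : Tendsto (fun t => Real.log (d₁ - d₂) + d₂ * (t - t₀)
        - Real.log (d₁ * exp (-(d₁ - d₂) * (t - t₀)) - d₂)) (nhdsWithin t₀ (Set.Ioi t₀))
        (nhds (Real.log (d₁ - d₂) + d₂ * (t₀ - t₀)
        - Real.log (d₁ * exp (-(d₁ - d₂) * (t₀ - t₀)) - d₂))) := hcont.continuousWithinAt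
    simpa using h2
  · have hcont : ContinuousAt (fun t => -Real.log (d₁ - d₂) + d₁ * (t - t₀)
        + Real.log (d₁ - d₂ * exp (-(d₁ - d₂) * (t - t₀)))) t₀ := by
      apply ContinuousAt.add
      · fun_prop
      · exact ContinuousAt.log (by fun_prop) (by simpa using (hA t₀).ne')
    have heq : q₂ = fun t => -Real.log (d₁ - d₂) + d₁ * (t - t₀)
        + Real.log (d₁ - d₂ * exp (-(d₁ - d₂) * (t - t₀))) := funext hq₂
    rw [heq]
    have h2 : Tendsto (fun t => -Real.log (d₁ - d₂) + d₁ * (t - t₀)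
        + Real.log (d₁ - d₂ * exp (-(d₁ - d₂) * (t - t₀)))) (nhdsWithin t₀ (Set.Ioi t₀))
        (nhds (-Real.log (d₁ - d₂) + d₁ * (t₀ - t₀)
        + Real.log (d₁ - d₂ * exp (-(d₁ - d₂) * (t₀ - t₀))))) := hcont.continuousWithinAt
    simpa using h2
end
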